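/- arXiv:1409.5140 — 2 statements merged into one kernel-verified Lean document; each statement's English description precedes it below -/
import Mathlib

section
/- Let K ⊆ ℝ^n_{≥0} be a set of nonnegative vectors, S ⊆ {1,…,n}, θ > 1, and suppose for every nonzero w ∈ K: θ‖w_{S^c}‖₁ < ‖w_S‖₁ (i.e., the code has FCP(S^c, θ)). Let F ⊆ {1,…,n}. Define γ'ᵢ = 1+α for i ∈ S∩F^c, 1−α for i ∈ S^c∩F^c, −1−α for i ∈ S^c∩F, and −1+α for i ∈ S∩F, where α > (θ+1)/(θ−1). Then for every nonzero w ∈ K, ∑ᵢ γ'ᵢ wᵢ > 0. -/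
theorem reweighted_cost_positive_on_cone {n : ℕ} (K : Set (Fin n → ℝ))
    (hKnonneg : ∀ w ∈ K, ∀ i, 0 ≤ w i)
    (S F : Finset (Fin n)) (θ α : ℝ) (hθ : 1 < θ)
    (hFCP : ∀ w ∈ K, w ≠ 0 → θ * ∑ i ∈ Sᶜ, |w i| < ∑ i ∈ S, |w i|)
    (hα : (θ + 1) / (θ - 1) < α)
    (γ' : Fin n → ℝ)
    (hγ' : ∀ i, γ' i = if i ∈ S then (if i ∈ F then -1 + α else 1 + α)
                       else (if i ∈ F then -1 - α else 1 - α)) :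
    ∀ w ∈ K, w ≠ 0 → 0 < ∑ i, γ' i * w i := by
  intro w hw hw0
  have hnn : ∀ i, 0 ≤ w i := hKnonneg w hw
  have hF0 := hFCP w hw hw0
  simp only [abs_of_nonneg (hnn _)] at hF0
  have hθ1 : (0:ℝ) < θ - 1 := by linarith
  have h1 : 1 < α := lt_trans ((one_lt_div hθ1).mpr (by linarith)) hα
  have h2 : θ + 1 < α * (θ - 1) := (div_lt_iff₀ hθ1).mp hα
  have hS : ∑ i ∈ S, (α - 1) * w i ≤ ∑ i ∈ S, γ' i * w i := by
    apply Finset.sum_le_sum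
    intro i hi
    have := hγ' i
    rw [if_pos hi] at this
    by_cases hf : i ∈ F <;> simp [hf] at this <;>
      nlinarith [hnn i]
  have hSc : ∑ i ∈ Sᶜ, (-(1 + α)) * w i ≤ ∑ i ∈ Sᶜ, γ' i * w i := by
    apply Finset.sum_le_sum
    intro i hi
    have := hγ' i
    rw [if_neg (by simpa using hi)] at this
    by_cases hf : i ∈ F <;> simp [hf] at this <;>
      nlinarith [hnn i]
  have hsplit : ∑ i, γ' i * w i
      = ∑ i ∈ S, γ' i * w i + ∑ i ∈ Sᶜ, γ' i * w i :=
    (Finset.sum_add_sum_compl S _).symm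
  have hBnn : 0 ≤ ∑ i ∈ Sᶜ, w i := Finset.sum_nonneg fun i _ => hnn i
  rw [hsplit]
  have hA : (α - 1) * ∑ i ∈ S, w i ≤ ∑ i ∈ S, γ' i * w i := by
    rw [Finset.mul_sum]; exact hS
  have hB : (-(1 + α)) * ∑ i ∈ Sᶜ, w i ≤ ∑ i ∈ Sᶜ, γ' i * w i := by
    rw [Finset.mul_sum]; exact hSc
  nlinarith [mul_lt_mul_of_pos_left hF0 (by linarith : (0:ℝ) < α - 1)]
end

section
/- Let c be a codeword (Hc = 0 mod 2) of a binary code with fundamental polytope P = ∩_j conv(C_j), and let γ, γ⁰ ∈ ℝ^n satisfy γ = −γ⁰. For any x ∈ P, γᵀx − γᵀc = (γ⁰)ᵀ R_c(x) − (γ⁰)ᵀ 0, i.e., γᵀ(x − c) = (γ⁰)ᵀ R_c(x). Consequently if x̂ minimizes γᵀx over P and R_c maps P onto P, then R_c(x̂) minimizes (γ⁰)ᵀx over P. -/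
theorem lp_objective_relative_identity {n : ℕ} (P : Set (Fin n → ℝ))
    (c : Fin n → ℝ) (hcBin : ∀ i, c i = 0 ∨ c i = 1)
    (γ γ0 : Fin n → ℝ)
    (hγ0 : ∀ i, γ0 i = if c i = 0 then γ i else -γ i)
    (R : (Fin n → ℝ) → (Fin n → ℝ))
    (hR : ∀ x i, R x i = if c i = 0 then x i else 1 - x i) :
    (∀ x : Fin n → ℝ, (∑ i, γ i * x i) - (∑ i, γ i * c i) = ∑ i, γ0 i * R x i) ∧
    (R '' P = P → ∀ xhat ∈ P, (∀ x ∈ P, ∑ i, γ i * xhat i ≤ ∑ i, γ i * x i) →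
      R xhat ∈ P ∧ ∀ x ∈ P, ∑ i, γ0 i * R xhat i ≤ ∑ i, γ0 i * x i) := by
  have key : ∀ x : Fin n → ℝ,
      (∑ i, γ i * x i) - (∑ i, γ i * c i) = ∑ i, γ0 i * R x i := by
    intro x
    rw [← Finset.sum_sub_distrib]
    apply Finset.sum_congr rfl
    intro i _
    rw [hγ0 i, hR x i]
    rcases hcBin i with h | h <;> simp [h] <;> ring
  refine ⟨key, fun hRP xhat hx hmin => ?_⟩
  have hRx : R xhat ∈ P := by rw [← hRP]; exact ⟨xhat, hx, rfl⟩
  refine ⟨hRx, fun x hxP => ?_⟩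
  obtain ⟨y, hy, rfl⟩ : ∃ y ∈ P, R y = x := by rw [← hRP] at hxP; exact hxP
  rw [← key xhat, ← key y]
  linarith [hmin y hy]
end
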